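/- arXiv:2303.14214 — 5 statements merged into one kernel-verified Lean document; each statement's English description precedes it below -/
import Mathlib

section
/- Let f = (f₁,f₂,f₃,f₄) ∈ C^∞(ℝ²,ℝ⁴) and suppose H₀(x) is nonempty for every x ∈ E with x ≠ (0,0). Then H_k(x) = H₀(x) for every x ∈ E with x ≠ (0,0) and every k ≥ 0, and H_k(0,0) = H₁(0,0) for every k ≥ 1. -/
open Real Set

/-- The closed unit square `E = [0,1] × [0,1]` in `ℝ²`. -/
def E : Set (ℝ × ℝ) := Set.Icc 0 1 ×ˢ Set.Icc 0 1

/-- The bundle `H₀` associated to the data `f₁, f₂, f₃, f₄`. -/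
def H0 (f1 f2 f3 f4 : ℝ × ℝ → ℝ) (x : ℝ × ℝ) : Set (ℝ × ℝ) :=
  if x = (0, 0) then
    {y : ℝ × ℝ | 0 ≤ f1 (0, 0) ∧ 0 ≤ f2 (0, 0) ∧ 0 ≤ f4 (0, 0) ∧
      -(10 : ℝ) ^ 6 * y.1 ≤ f3 (0, 0)}
  else
    {y : ℝ × ℝ |
      x.1 ^ 4 / (x.1 ^ 2 + x.2 ^ 2) ^ 2 * y.1 + x.2 ^ 4 / (x.1 ^ 2 + x.2 ^ 2) ^ 2 * y.2 ≤ f1 x ∧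
      x.2 ^ 4 / (x.1 ^ 2 + x.2 ^ 2) ^ 2 * y.1 - x.1 ^ 4 / (x.1 ^ 2 + x.2 ^ 2) ^ 2 * y.2 ≤ f2 x ∧
      -(x.1 ^ 4 / (x.1 ^ 2 + x.2 ^ 2) ^ 2) * y.1 - x.2 ^ 4 / (x.1 ^ 2 + x.2 ^ 2) ^ 2 * y.2 ≤ f3 x ∧
      -(x.2 ^ 4 / (x.1 ^ 2 + x.2 ^ 2) ^ 2) * y.1 + x.1 ^ 4 / (x.1 ^ 2 + x.2 ^ 2) ^ 2 * y.2 ≤ f4 x}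

/-- The `C⁰`-Glaeser refinement of a bundle `K` over a set `S`. -/
def glaeserRefine {α β : Type*} [PseudoMetricSpace α] [PseudoMetricSpace β]
    (S : Set α) (K : α → Set β) : α → Set β := fun x =>
  {z ∈ K x | ∀ ε > (0 : ℝ), ∃ δ > (0 : ℝ), ∀ y ∈ S, dist y x < δ → ∃ z' ∈ K y, dist z z' < ε}

/-- The iterated Glaeser refinements `H_k` of the bundle `H₀` over `E`. -/
def H (f1 f2 f3 f4 : ℝ × ℝ → ℝ) : ℕ → (ℝ × ℝ) → Set (ℝ × ℝ)
  | 0 => H0 f1 f2 f3 f4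
  | k + 1 => glaeserRefine E (H f1 f2 f3 f4 k)

noncomputable def Acoef (y : ℝ × ℝ) : ℝ := y.1 ^ 4 / (y.1 ^ 2 + y.2 ^ 2) ^ 2
noncomputable def Bcoef (y : ℝ × ℝ) : ℝ := y.2 ^ 4 / (y.1 ^ 2 + y.2 ^ 2) ^ 2

lemma ne00 {y : ℝ × ℝ} (hy : y ≠ (0,0)) : y.1 ≠ 0 ∨ y.2 ≠ 0 := by
  by_contra hc
  push_neg at hc
  exact hy (Prod.ext hc.1 hc.2)

lemma den_pos {y : ℝ × ℝ} (hy : y ≠ (0,0)) : 0 < y.1 ^ 2 + y.2 ^ 2 := by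
  rcases ne00 hy with h | h <;> positivity

lemma s_pos {y : ℝ × ℝ} (hy : y ≠ (0,0)) : 0 < Acoef y ^ 2 + Bcoef y ^ 2 := by
  have hd := den_pos hy
  rcases ne00 hy with h | h
  · have h1 : 0 < Acoef y := by unfold Acoef; positivity
    nlinarith [sq_nonneg (Bcoef y)]
  · have h1 : 0 < Bcoef y := by unfold Bcoef; positivity
    nlinarith [sq_nonneg (Acoef y)]

lemma memH0_iff (f1 f2 f3 f4 : ℝ × ℝ → ℝ) {x : ℝ × ℝ} (hx : x ≠ (0,0)) (z : ℝ × ℝ) :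
    z ∈ H0 f1 f2 f3 f4 x ↔
      Acoef x * z.1 + Bcoef x * z.2 ≤ f1 x ∧
      Bcoef x * z.1 - Acoef x * z.2 ≤ f2 x ∧
      -(Acoef x) * z.1 - Bcoef x * z.2 ≤ f3 x ∧
      -(Bcoef x) * z.1 + Acoef x * z.2 ≤ f4 x := by
  rw [H0, if_neg hx]
  rfl

/-- The key lemma: for x ≠ 0, every point of H0 x can be approximated in H0 y for y near x. -/
lemma key (f1 f2 f3 f4 : ℝ × ℝ → ℝ) (hc1 : Continuous f1) (hc2 : Continuous f2)
    (hc3 : Continuous f3) (hc4 : Continuous f4)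
    (h : ∀ x ∈ E, x ≠ ((0:ℝ),(0:ℝ)) → (H0 f1 f2 f3 f4 x).Nonempty)
    (x : ℝ × ℝ) (hx0 : x ≠ ((0:ℝ),(0:ℝ))) (z : ℝ × ℝ) (hz : z ∈ H0 f1 f2 f3 f4 x) :
    ∀ ε > (0:ℝ), ∃ δ > (0:ℝ), ∀ y ∈ E, dist y x < δ →
      y ≠ ((0:ℝ),(0:ℝ)) ∧ ∃ z' ∈ H0 f1 f2 f3 f4 y, dist z z' < ε := by
  intro ε hε
  rw [memH0_iff f1 f2 f3 f4 hx0] at hz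
  obtain ⟨h1, h2, h3, h4⟩ := hz
  set g : ℝ × ℝ → ℝ × ℝ := fun y =>
      ((Acoef y * max (-(f3 y)) (min (f1 y) (Acoef y * z.1 + Bcoef y * z.2)) +
        Bcoef y * max (-(f4 y)) (min (f2 y) (Bcoef y * z.1 - Acoef y * z.2))) /
          (Acoef y ^ 2 + Bcoef y ^ 2),
       (Bcoef y * max (-(f3 y)) (min (f1 y) (Acoef y * z.1 + Bcoef y * z.2)) -
        Acoef y * max (-(f4 y)) (min (f2 y) (Bcoef y * z.1 - Acoef y * z.2))) /
          (Acoef y ^ 2 + Bcoef y ^ 2)) with hg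
  have hden : (x.1 ^ 2 + x.2 ^ 2) ^ 2 ≠ 0 := by
    have := den_pos hx0; positivity
  have hs : Acoef x ^ 2 + Bcoef x ^ 2 ≠ 0 := ne_of_gt (s_pos hx0)
  have hcont : ContinuousAt g x := by
    have hA : ContinuousAt Acoef x := ContinuousAt.div (by fun_prop) (by fun_prop) hden
    have hB : ContinuousAt Bcoef x := ContinuousAt.div (by fun_prop) (by fun_prop) hden
    fun_prop (disch := assumption)
  have hgx : g x = z := by
    have hcu : max (-(f3 x)) (min (f1 x) (Acoef x * z.1 + Bcoef x * z.2)) =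
        Acoef x * z.1 + Bcoef x * z.2 := by
      rw [min_eq_right h1, max_eq_right (by linarith)]
    have hcv : max (-(f4 x)) (min (f2 x) (Bcoef x * z.1 - Acoef x * z.2)) =
        Bcoef x * z.1 - Acoef x * z.2 := by
      rw [min_eq_right h2, max_eq_right (by linarith)]
    rw [hg]
    simp only [hcu, hcv]
    have := s_pos hx0
    apply Prod.ext <;> field_simp <;> ring
  -- from continuity, get δ₀ for ε
  rw [Metric.continuousAt_iff] at hcont
  obtain ⟨δ₀, hδ₀, hδ⟩ := hcont ε hε
  have hdx : 0 < dist x ((0:ℝ),(0:ℝ)) := dist_pos.mpr hx0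
  refine ⟨min δ₀ (dist x ((0:ℝ),(0:ℝ))), lt_min hδ₀ hdx, ?_⟩
  intro y hyE hyd
  have hy0 : y ≠ ((0:ℝ),(0:ℝ)) := by
    intro hy
    rw [hy] at hyd
    have := lt_of_lt_of_le hyd (min_le_right _ _)
    rw [dist_comm] at this
    exact lt_irrefl _ this
  refine ⟨hy0, g y, ?_, ?_⟩
  · -- g y ∈ H0 y
    obtain ⟨hR1, hR2⟩ : -(f3 y) ≤ f1 y ∧ -(f4 y) ≤ f2 y := by
      obtain ⟨w, hw⟩ := h y hyE hy0
      rw [memH0_iff f1 f2 f3 f4 hy0] at hw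
      constructor <;> linarith [hw.1, hw.2.1, hw.2.2.1, hw.2.2.2]
    have hsy := s_pos hy0
    set cu := max (-(f3 y)) (min (f1 y) (Acoef y * z.1 + Bcoef y * z.2)) with hcu
    set cv := max (-(f4 y)) (min (f2 y) (Bcoef y * z.1 - Acoef y * z.2)) with hcv
    have e1 : Acoef y * (g y).1 + Bcoef y * (g y).2 = cu := by
      rw [hg]; field_simp; ring
    have e2 : Bcoef y * (g y).1 - Acoef y * (g y).2 = cv := by
      rw [hg]; field_simp; ring
    have hcu1 : cu ≤ f1 y := max_le hR1 (min_le_left _ _)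
    have hcu3 : -(f3 y) ≤ cu := le_max_left _ _
    have hcv2 : cv ≤ f2 y := max_le hR2 (min_le_left _ _)
    have hcv4 : -(f4 y) ≤ cv := le_max_left _ _
    rw [memH0_iff f1 f2 f3 f4 hy0]
    refine ⟨by linarith, by linarith, by linarith, by linarith⟩
  · have := hδ (lt_of_lt_of_le hyd (min_le_left _ _))
    rw [hgx] at this
    rw [dist_comm]
    exact this
theorem stmt_3 (f1 f2 f3 f4 : ℝ × ℝ → ℝ)
    (hf1 : ContDiff ℝ (⊤ : ℕ∞) f1) (hf2 : ContDiff ℝ (⊤ : ℕ∞) f2)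
    (hf3 : ContDiff ℝ (⊤ : ℕ∞) f3) (hf4 : ContDiff ℝ (⊤ : ℕ∞) f4)
    (h : ∀ x ∈ E, x ≠ ((0 : ℝ), (0 : ℝ)) → (H f1 f2 f3 f4 0 x).Nonempty) :
    (∀ x ∈ E, x ≠ ((0 : ℝ), (0 : ℝ)) → ∀ k : ℕ,
      H f1 f2 f3 f4 k x = H f1 f2 f3 f4 0 x) ∧
    (∀ k : ℕ, 1 ≤ k → H f1 f2 f3 f4 k (0, 0) = H f1 f2 f3 f4 1 (0, 0)) := by
  have h0 : ∀ x ∈ E, x ≠ ((0 : ℝ), (0 : ℝ)) → (H0 f1 f2 f3 f4 x).Nonempty := h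
  have hkey := key f1 f2 f3 f4 hf1.continuous hf2.continuous hf3.continuous hf4.continuous h0
  -- Part 1
  have part1 : ∀ k : ℕ, ∀ x ∈ E, x ≠ ((0 : ℝ), (0 : ℝ)) →
      H f1 f2 f3 f4 k x = H f1 f2 f3 f4 0 x := by
    intro k
    induction k with
    | zero => intro x _ _; rfl
    | succ k ih =>
      intro x hxE hx0
      ext z
      show z ∈ glaeserRefine E (H f1 f2 f3 f4 k) x ↔ z ∈ H0 f1 f2 f3 f4 x
      constructor
      · intro hz
        have := hz.1
        rwa [ih x hxE hx0] at this
      · intro hz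
        refine ⟨by rwa [ih x hxE hx0], ?_⟩
        intro ε hε
        obtain ⟨δ, hδ, hδ'⟩ := hkey x hx0 z hz ε hε
        refine ⟨δ, hδ, ?_⟩
        intro y hyE hyd
        obtain ⟨hy0, z', hz', hd⟩ := hδ' y hyE hyd
        exact ⟨z', by rwa [ih y hyE hy0], hd⟩
  refine ⟨fun x hxE hx0 k => part1 k x hxE hx0, ?_⟩
  -- Part 2
  have part2 : ∀ m : ℕ, H f1 f2 f3 f4 (m + 1) (0, 0) = H f1 f2 f3 f4 1 (0, 0) := by
    intro m
    induction m with
    | zero => rfl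
    | succ m ih =>
      ext z
      show z ∈ glaeserRefine E (H f1 f2 f3 f4 (m + 1)) (0, 0) ↔
        z ∈ H f1 f2 f3 f4 1 (0, 0)
      constructor
      · intro hz
        have := hz.1
        rwa [ih] at this
      · intro hz
        refine ⟨by rwa [ih], ?_⟩
        have hz' : z ∈ glaeserRefine E (H f1 f2 f3 f4 0) (0, 0) := hz
        intro ε hε
        obtain ⟨δ, hδ, hδ'⟩ := hz'.2 ε hε
        refine ⟨δ, hδ, ?_⟩
        intro y hyE hyd
        by_cases hy0 : y = ((0 : ℝ), (0 : ℝ))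
        · refine ⟨z, ?_, by simpa [dist_self] using hε⟩
          rw [hy0, ih]
          exact hz
        · obtain ⟨z', hz'', hd⟩ := hδ' y hyE hyd
          refine ⟨z', ?_, hd⟩
          rwa [part1 (m + 1) y hyE hy0]
  intro k hk
  obtain ⟨m, rfl⟩ := Nat.exists_eq_add_of_le hk
  rw [Nat.add_comm]
  exact part2 m
end

section
/- Let f = (f₁,f₂,f₃,f₄) ∈ C^∞(ℝ²,ℝ⁴) and suppose H₀(x) is nonempty for every x ∈ E. Then H₁(0,0) equals the intersection of H₀(0,0) with the set of (y₁,y₂) ∈ ℝ² such that for every θ ∈ [0,π/2]: cos⁴θ·y₁ + sin⁴θ·y₂ ≤ f₁(0,0), sin⁴θ·y₁ − cos⁴θ·y₂ ≤ f₂(0,0), −cos⁴θ·y₁ − sin⁴θ·y₂ ≤ f₃(0,0), and −sin⁴θ·y₁ + cos⁴θ·y₂ ≤ f₄(0,0). -/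
open Real Set

lemma auxD {a b : ℝ} (hab : a + b = 1) : 1/8 ≤ a ^ 4 + b ^ 4 := by
  nlinarith [sq_nonneg (a - b), sq_nonneg (a ^ 2 - b ^ 2), sq_nonneg (a ^ 2 + b ^ 2 - 1/2)]

lemma auxab2 {a b : ℝ} (ha : 0 ≤ a) (hb : 0 ≤ b) (hab : a + b = 1) : a ^ 2 + b ^ 2 ≤ 1 := by
  nlinarith [mul_nonneg ha hb]

lemma aux_mul_le {a d ε : ℝ} (ha0 : 0 ≤ a) (ha1 : a ≤ 1) (hd : |d| < ε) : a * d ≤ ε := by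
  rcases abs_lt.mp hd with ⟨h1, h2⟩
  nlinarith

set_option maxHeartbeats 1000000 in
theorem stmt_5 (f1 f2 f3 f4 : ℝ × ℝ → ℝ)
    (hf1 : ContDiff ℝ (⊤ : ℕ∞) f1) (hf2 : ContDiff ℝ (⊤ : ℕ∞) f2)
    (hf3 : ContDiff ℝ (⊤ : ℕ∞) f3) (hf4 : ContDiff ℝ (⊤ : ℕ∞) f4)
    (h : ∀ x ∈ E, (H f1 f2 f3 f4 0 x).Nonempty) :
    H f1 f2 f3 f4 1 (0, 0) =
      H0 f1 f2 f3 f4 (0, 0) ∩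
        {y : ℝ × ℝ | ∀ θ ∈ Set.Icc (0 : ℝ) (π / 2),
          Real.cos θ ^ 4 * y.1 + Real.sin θ ^ 4 * y.2 ≤ f1 (0, 0) ∧
          Real.sin θ ^ 4 * y.1 - Real.cos θ ^ 4 * y.2 ≤ f2 (0, 0) ∧
          -(Real.cos θ ^ 4) * y.1 - Real.sin θ ^ 4 * y.2 ≤ f3 (0, 0) ∧
          -(Real.sin θ ^ 4) * y.1 + Real.cos θ ^ 4 * y.2 ≤ f4 (0, 0)} := by
  have hcont : ∀ η > (0:ℝ), ∃ δ > (0:ℝ), ∀ y : ℝ × ℝ, dist y ((0:ℝ), (0:ℝ)) < δ →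
      |f1 y - f1 (0,0)| < η ∧ |f2 y - f2 (0,0)| < η ∧
      |f3 y - f3 (0,0)| < η ∧ |f4 y - f4 (0,0)| < η := by
    intro η hη
    obtain ⟨δ1, hδ1, H1⟩ := Metric.continuousAt_iff.mp
      (hf1.continuous.continuousAt (x := ((0:ℝ),(0:ℝ)))) η hη
    obtain ⟨δ2, hδ2, H2⟩ := Metric.continuousAt_iff.mp
      (hf2.continuous.continuousAt (x := ((0:ℝ),(0:ℝ)))) η hη
    obtain ⟨δ3, hδ3, H3⟩ := Metric.continuousAt_iff.mp
      (hf3.continuous.continuousAt (x := ((0:ℝ),(0:ℝ)))) η hη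
    obtain ⟨δ4, hδ4, H4⟩ := Metric.continuousAt_iff.mp
      (hf4.continuous.continuousAt (x := ((0:ℝ),(0:ℝ)))) η hη
    refine ⟨min (min δ1 δ2) (min δ3 δ4), by positivity, fun y hy => ?_⟩
    have hy1 : dist y ((0:ℝ),(0:ℝ)) < δ1 := lt_of_lt_of_le hy ((min_le_left _ _).trans (min_le_left _ _))
    have hy2 : dist y ((0:ℝ),(0:ℝ)) < δ2 := lt_of_lt_of_le hy ((min_le_left _ _).trans (min_le_right _ _))
    have hy3 : dist y ((0:ℝ),(0:ℝ)) < δ3 := lt_of_lt_of_le hy ((min_le_right _ _).trans (min_le_left _ _))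
    have hy4 : dist y ((0:ℝ),(0:ℝ)) < δ4 := lt_of_lt_of_le hy ((min_le_right _ _).trans (min_le_right _ _))
    exact ⟨by simpa [Real.dist_eq] using H1 hy1, by simpa [Real.dist_eq] using H2 hy2,
      by simpa [Real.dist_eq] using H3 hy3, by simpa [Real.dist_eq] using H4 hy4⟩
  ext z
  simp only [H, glaeserRefine, Set.mem_sep_iff, Set.mem_inter_iff, Set.mem_setOf_eq]
  constructor
  · rintro ⟨hz0, hz⟩
    refine ⟨hz0, ?_⟩
    rintro θ ⟨hθ0, hθ1⟩
    have hpi := Real.pi_pos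
    have hc0 : 0 ≤ Real.cos θ := Real.cos_nonneg_of_mem_Icc ⟨by linarith, hθ1⟩
    have hs0 : 0 ≤ Real.sin θ := Real.sin_nonneg_of_nonneg_of_le_pi hθ0 (by linarith)
    have hc1 : Real.cos θ ≤ 1 := Real.cos_le_one θ
    have hs1 : Real.sin θ ≤ 1 := Real.sin_le_one θ
    have hcs : Real.sin θ ^ 2 + Real.cos θ ^ 2 = 1 := Real.sin_sq_add_cos_sq θ
    set c := Real.cos θ
    set s := Real.sin θ
    have hc4 : 0 ≤ c ^ 4 := by positivity
    have hs4 : 0 ≤ s ^ 4 := by positivity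
    have hc41 : c ^ 4 ≤ 1 := pow_le_one₀ hc0 hc1
    have hs41 : s ^ 4 ≤ 1 := pow_le_one₀ hs0 hs1
    have key : ∀ ε > (0:ℝ),
        (c ^ 4 * z.1 + s ^ 4 * z.2 ≤ f1 (0,0) + ε) ∧
        (s ^ 4 * z.1 - c ^ 4 * z.2 ≤ f2 (0,0) + ε) ∧
        (-(c ^ 4) * z.1 - s ^ 4 * z.2 ≤ f3 (0,0) + ε) ∧
        (-(s ^ 4) * z.1 + c ^ 4 * z.2 ≤ f4 (0,0) + ε) := by
      intro ε hε
      obtain ⟨δ1, hδ1, hcy⟩ := hcont (ε/3) (by positivity)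
      obtain ⟨δ2, hδ2, hzy⟩ := hz (ε/3) (by positivity)
      set t := min (min δ1 δ2) 1 / 2 with ht
      have ht0 : 0 < t := by positivity
      have ht1 : t ≤ 1/2 := by
        rw [ht]
        have := min_le_right (min δ1 δ2) 1
        linarith
      have htδ1 : t < δ1 := by
        have h1 := min_le_left (min δ1 δ2) 1
        have h2 := min_le_left δ1 δ2
        rw [ht]; linarith
      have htδ2 : t < δ2 := by
        have h1 := min_le_left (min δ1 δ2) 1
        have h2 := min_le_right δ1 δ2
        rw [ht]; linarith
      set y : ℝ × ℝ := (t * c, t * s) with hy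
      have hyE : y ∈ E := by
        constructor
        · constructor
          · show (0:ℝ) ≤ t * c; positivity
          · show t * c ≤ (1:ℝ)
            have : t * c ≤ t * 1 := mul_le_mul_of_nonneg_left hc1 ht0.le
            linarith
        · constructor
          · show (0:ℝ) ≤ t * s; positivity
          · show t * s ≤ (1:ℝ)
            have : t * s ≤ t * 1 := mul_le_mul_of_nonneg_left hs1 ht0.le
            linarith
      have hdy : ∀ δ', t < δ' → dist y ((0:ℝ),(0:ℝ)) < δ' := by
        intro δ' hδ'
        rw [Prod.dist_eq]
        have e1 : dist y.1 (0:ℝ) = t * c := by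
          rw [Real.dist_eq, sub_zero, abs_of_nonneg (by positivity)]
        have e2 : dist y.2 (0:ℝ) = t * s := by
          rw [Real.dist_eq, sub_zero, abs_of_nonneg (by positivity)]
        rw [e1, e2]
        have : t * c ≤ t := mul_le_of_le_one_right ht0.le hc1
        have : t * s ≤ t := mul_le_of_le_one_right ht0.le hs1
        apply max_lt <;> linarith
      obtain ⟨z', hz'mem, hz'dist⟩ := hzy y hyE (hdy δ2 htδ2)
      have hfc := hcy y (hdy δ1 htδ1)
      have hy0 : y ≠ ((0:ℝ),(0:ℝ)) := by
        intro hcon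
        rw [hy, Prod.mk.injEq] at hcon
        have hc' : c = 0 := by
          rcases mul_eq_zero.mp hcon.1 with h' | h'
          · exact absurd h' (ne_of_gt ht0)
          · exact h'
        have hs' : s = 0 := by
          rcases mul_eq_zero.mp hcon.2 with h' | h'
          · exact absurd h' (ne_of_gt ht0)
          · exact h'
        rw [hc', hs'] at hcs; norm_num at hcs
      simp only [H0, if_neg hy0, Set.mem_setOf_eq] at hz'mem
      have hsum : y.1 ^ 2 + y.2 ^ 2 = t ^ 2 := by
        show (t * c) ^ 2 + (t * s) ^ 2 = t ^ 2
        linear_combination t ^ 2 * hcs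
      have htne : t ≠ 0 := ne_of_gt ht0
      have e1 : y.1 ^ 4 / (y.1 ^ 2 + y.2 ^ 2) ^ 2 = c ^ 4 := by
        rw [hsum]
        show (t * c) ^ 4 / (t ^ 2) ^ 2 = c ^ 4
        field_simp
      have e2 : y.2 ^ 4 / (y.1 ^ 2 + y.2 ^ 2) ^ 2 = s ^ 4 := by
        rw [hsum]
        show (t * s) ^ 4 / (t ^ 2) ^ 2 = s ^ 4
        field_simp
      rw [e1, e2] at hz'mem
      obtain ⟨m1, m2, m3, m4⟩ := hz'mem
      obtain ⟨b1, b2, b3, b4⟩ := hfc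
      rw [abs_lt] at b1 b2 b3 b4
      have hd1 : |z.1 - z'.1| < ε/3 := by
        refine lt_of_le_of_lt ?_ hz'dist
        rw [Prod.dist_eq, Real.dist_eq]
        exact le_max_left _ _
      have hd2 : |z.2 - z'.2| < ε/3 := by
        refine lt_of_le_of_lt ?_ hz'dist
        rw [Prod.dist_eq, Real.dist_eq]
        exact le_max_right _ _
      have hd1' : |z'.1 - z.1| < ε/3 := by rwa [abs_sub_comm]
      have hd2' : |z'.2 - z.2| < ε/3 := by rwa [abs_sub_comm]
      refine ⟨?_, ?_, ?_, ?_⟩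
      · have k1 := aux_mul_le hc4 hc41 hd1
        have k2 := aux_mul_le hs4 hs41 hd2
        linarith [m1, b1.2]
      · have k1 := aux_mul_le hs4 hs41 hd1
        have k2 := aux_mul_le hc4 hc41 hd2'
        linarith [m2, b2.2]
      · have k1 := aux_mul_le hc4 hc41 hd1'
        have k2 := aux_mul_le hs4 hs41 hd2'
        linarith [m3, b3.2]
      · have k1 := aux_mul_le hs4 hs41 hd1'
        have k2 := aux_mul_le hc4 hc41 hd2
        linarith [m4, b4.2]
    refine ⟨le_of_forall_pos_le_add fun ε hε => (key ε hε).1,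
      le_of_forall_pos_le_add fun ε hε => (key ε hε).2.1,
      le_of_forall_pos_le_add fun ε hε => (key ε hε).2.2.1,
      le_of_forall_pos_le_add fun ε hε => (key ε hε).2.2.2⟩
  · rintro ⟨hz0, hθall⟩
    refine ⟨hz0, ?_⟩
    intro ε hε
    obtain ⟨δ, hδ, hcy⟩ := hcont (ε/9) (by positivity)
    refine ⟨δ, hδ, ?_⟩
    intro y hyE hyd
    by_cases hy0 : y = ((0:ℝ),(0:ℝ))
    · refine ⟨z, ?_, by simpa using hε⟩
      rw [hy0]
      exact hz0
    · obtain ⟨b1, b2, b3, b4⟩ := hcy y hyd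
      rw [abs_lt] at b1 b2 b3 b4
      have hy1 : 0 ≤ y.1 := hyE.1.1
      have hy2 : 0 ≤ y.2 := hyE.2.1
      have hyne : y.1 ≠ 0 ∨ y.2 ≠ 0 := by
        by_contra hcon
        push_neg at hcon
        exact hy0 (Prod.ext hcon.1 hcon.2)
      have hr2 : 0 < y.1 ^ 2 + y.2 ^ 2 := by
        rcases hyne with h' | h'
        · have h2 : 0 < y.1 ^ 2 := by positivity
          linarith [sq_nonneg y.2]
        · have h2 : 0 < y.2 ^ 2 := by positivity
          linarith [sq_nonneg y.1]
      obtain ⟨a, b, ha0, hb0, hab, hA, hB⟩ :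
          ∃ a b : ℝ, 0 ≤ a ∧ 0 ≤ b ∧ a + b = 1 ∧
            y.1 ^ 4 / (y.1 ^ 2 + y.2 ^ 2) ^ 2 = a ^ 2 ∧
            y.2 ^ 4 / (y.1 ^ 2 + y.2 ^ 2) ^ 2 = b ^ 2 := by
        refine ⟨y.1 ^ 2 / (y.1 ^ 2 + y.2 ^ 2), y.2 ^ 2 / (y.1 ^ 2 + y.2 ^ 2),
          by positivity, by positivity, by field_simp, ?_, ?_⟩ <;>
        · rw [div_pow]; ring_nf
      have ha1 : a ≤ 1 := by linarith
      -- get the θ-inequalities specialised at the angle of y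
      have hsa1 : Real.sqrt a ≤ 1 := Real.sqrt_le_one.mpr ha1
      have hsa0 : 0 ≤ Real.sqrt a := Real.sqrt_nonneg a
      obtain ⟨t1, t2, t3, t4⟩ := hθall (Real.arccos (Real.sqrt a))
        ⟨Real.arccos_nonneg _, Real.arccos_le_pi_div_two.mpr hsa0⟩
      have hcos : Real.cos (Real.arccos (Real.sqrt a)) ^ 2 = a := by
        rw [Real.cos_arccos (by linarith) hsa1, Real.sq_sqrt ha0]
      have hsin : Real.sin (Real.arccos (Real.sqrt a)) ^ 2 = b := by
        have := Real.sin_sq_add_cos_sq (Real.arccos (Real.sqrt a))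
        rw [hcos] at this
        linarith
      rw [show Real.cos (Real.arccos (Real.sqrt a)) ^ 4
            = (Real.cos (Real.arccos (Real.sqrt a)) ^ 2) ^ 2 by ring,
          show Real.sin (Real.arccos (Real.sqrt a)) ^ 4
            = (Real.sin (Real.arccos (Real.sqrt a)) ^ 2) ^ 2 by ring,
          hcos, hsin] at t1 t2 t3 t4
      -- nonemptiness of the box at y
      obtain ⟨w, hw⟩ := h y hyE
      simp only [H, H0, if_neg hy0, Set.mem_setOf_eq] at hw
      rw [hA, hB] at hw
      have hbox1 : -(f3 y) ≤ f1 y := by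
        obtain ⟨w1, _, w3, _⟩ := hw
        linarith
      have hbox2 : -(f4 y) ≤ f2 y := by
        obtain ⟨_, w2, _, w4⟩ := hw
        linarith
      -- clamped values
      set u := a ^ 2 * z.1 + b ^ 2 * z.2 with hu
      set v := b ^ 2 * z.1 - a ^ 2 * z.2 with hv
      set u' := max (-(f3 y)) (min u (f1 y)) with hu'
      set v' := max (-(f4 y)) (min v (f2 y)) with hv'
      have hu'le : u' ≤ f1 y := max_le hbox1 (min_le_right _ _)
      have hu'ge : -(f3 y) ≤ u' := le_max_left _ _
      have hv'le : v' ≤ f2 y := max_le hbox2 (min_le_right _ _)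
      have hv'ge : -(f4 y) ≤ v' := le_max_left _ _
      have hu'lo : u - ε/9 ≤ u' := by
        refine le_trans (le_min (by linarith) ?_) (le_max_right _ _)
        -- u ≤ f1 (0,0) gives u - ε/9 ≤ f1 y
        have : u ≤ f1 (0,0) := t1
        linarith [b1.1]
      have hu'hi : u' ≤ u + ε/9 := by
        refine max_le ?_ ((min_le_left _ _).trans (by linarith))
        have : -u ≤ f3 (0,0) := by rw [hu]; linarith [t3]
        linarith [b3.2]
      have hv'lo : v - ε/9 ≤ v' := by
        refine le_trans (le_min (by linarith) ?_) (le_max_right _ _)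
        have : v ≤ f2 (0,0) := t2
        linarith [b2.1]
      have hv'hi : v' ≤ v + ε/9 := by
        refine max_le ?_ ((min_le_left _ _).trans (by linarith))
        have : -v ≤ f4 (0,0) := by rw [hv]; linarith [t4]
        linarith [b4.2]
      have hD8 : (1:ℝ)/8 ≤ a ^ 4 + b ^ 4 := auxD hab
      have hD : (0:ℝ) < a ^ 4 + b ^ 4 := lt_of_lt_of_le (by norm_num) hD8
      have hDne : a ^ 4 + b ^ 4 ≠ 0 := ne_of_gt hD
      refine ⟨((a ^ 2 * u' + b ^ 2 * v') / (a ^ 4 + b ^ 4),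
               (b ^ 2 * u' - a ^ 2 * v') / (a ^ 4 + b ^ 4)), ?_, ?_⟩
      · simp only [H0, if_neg hy0, Set.mem_setOf_eq]
        rw [hA, hB]
        have k1 : a ^ 2 * ((a ^ 2 * u' + b ^ 2 * v') / (a ^ 4 + b ^ 4))
            + b ^ 2 * ((b ^ 2 * u' - a ^ 2 * v') / (a ^ 4 + b ^ 4)) = u' := by
          field_simp
          ring
        have k2 : b ^ 2 * ((a ^ 2 * u' + b ^ 2 * v') / (a ^ 4 + b ^ 4))
            - a ^ 2 * ((b ^ 2 * u' - a ^ 2 * v') / (a ^ 4 + b ^ 4)) = v' := by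
          field_simp
          ring
        refine ⟨by linarith [k1, hu'le], by linarith [k2, hv'le], ?_, ?_⟩
        · have : -(a ^ 2 * ((a ^ 2 * u' + b ^ 2 * v') / (a ^ 4 + b ^ 4)))
              - b ^ 2 * ((b ^ 2 * u' - a ^ 2 * v') / (a ^ 4 + b ^ 4)) = -u' := by
            linear_combination -k1
          linarith [this, hu'ge]
        · have : -(b ^ 2 * ((a ^ 2 * u' + b ^ 2 * v') / (a ^ 4 + b ^ 4)))
              + a ^ 2 * ((b ^ 2 * u' - a ^ 2 * v') / (a ^ 4 + b ^ 4)) = -v' := by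
            linear_combination -k2
          linarith [this, hv'ge]
      · -- distance bound
        have hz1 : z.1 = (a ^ 2 * u + b ^ 2 * v) / (a ^ 4 + b ^ 4) := by
          rw [hu, hv]
          field_simp
          ring
        have hz2 : z.2 = (b ^ 2 * u - a ^ 2 * v) / (a ^ 4 + b ^ 4) := by
          rw [hu, hv]
          field_simp
          ring
        have hab2 : a ^ 2 + b ^ 2 ≤ 1 := auxab2 ha0 hb0 hab
        have hnum1 : |a ^ 2 * (u - u') + b ^ 2 * (v - v')| ≤ ε/9 := by
          have k1 : a ^ 2 * (u - u') ≤ a ^ 2 * (ε/9) :=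
            mul_le_mul_of_nonneg_left (by linarith) (sq_nonneg a)
          have k1' : a ^ 2 * (-(ε/9)) ≤ a ^ 2 * (u - u') :=
            mul_le_mul_of_nonneg_left (by linarith) (sq_nonneg a)
          have k2 : b ^ 2 * (v - v') ≤ b ^ 2 * (ε/9) :=
            mul_le_mul_of_nonneg_left (by linarith) (sq_nonneg b)
          have k2' : b ^ 2 * (-(ε/9)) ≤ b ^ 2 * (v - v') :=
            mul_le_mul_of_nonneg_left (by linarith) (sq_nonneg b)
          have hs : (a ^ 2 + b ^ 2) * (ε/9) ≤ ε/9 :=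
            mul_le_of_le_one_left (by positivity) hab2
          rw [abs_le]
          constructor <;> linarith [k1, k1', k2, k2', hs]
        have hnum2 : |b ^ 2 * (u - u') - a ^ 2 * (v - v')| ≤ ε/9 := by
          have k1 : b ^ 2 * (u - u') ≤ b ^ 2 * (ε/9) :=
            mul_le_mul_of_nonneg_left (by linarith) (sq_nonneg b)
          have k1' : b ^ 2 * (-(ε/9)) ≤ b ^ 2 * (u - u') :=
            mul_le_mul_of_nonneg_left (by linarith) (sq_nonneg b)
          have k2 : a ^ 2 * (v - v') ≤ a ^ 2 * (ε/9) :=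
            mul_le_mul_of_nonneg_left (by linarith) (sq_nonneg a)
          have k2' : a ^ 2 * (-(ε/9)) ≤ a ^ 2 * (v - v') :=
            mul_le_mul_of_nonneg_left (by linarith) (sq_nonneg a)
          have hs : (a ^ 2 + b ^ 2) * (ε/9) ≤ ε/9 :=
            mul_le_of_le_one_left (by positivity) hab2
          rw [abs_le]
          constructor <;> linarith [k1, k1', k2, k2', hs]
        rw [Prod.dist_eq]
        apply max_lt
        · rw [Real.dist_eq]
          have e : z.1 - (a ^ 2 * u' + b ^ 2 * v') / (a ^ 4 + b ^ 4)
              = (a ^ 2 * (u - u') + b ^ 2 * (v - v')) / (a ^ 4 + b ^ 4) := by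
            rw [hz1]
            field_simp
            ring
          calc |z.1 - (a ^ 2 * u' + b ^ 2 * v') / (a ^ 4 + b ^ 4)|
              = |a ^ 2 * (u - u') + b ^ 2 * (v - v')| / (a ^ 4 + b ^ 4) := by
                rw [e, abs_div, abs_of_pos hD]
            _ ≤ (ε/9) / (1/8) := by
                apply div_le_div₀ (by positivity) hnum1 (by norm_num) hD8
            _ < ε := by linarith
        · rw [Real.dist_eq]
          have e : z.2 - (b ^ 2 * u' - a ^ 2 * v') / (a ^ 4 + b ^ 4)
              = (b ^ 2 * (u - u') - a ^ 2 * (v - v')) / (a ^ 4 + b ^ 4) := by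
            rw [hz2]
            field_simp
            ring
          calc |z.2 - (b ^ 2 * u' - a ^ 2 * v') / (a ^ 4 + b ^ 4)|
              = |b ^ 2 * (u - u') - a ^ 2 * (v - v')| / (a ^ 4 + b ^ 4) := by
                rw [e, abs_div, abs_of_pos hD]
            _ ≤ (ε/9) / (1/8) := by
                apply div_le_div₀ (by positivity) hnum2 (by norm_num) hD8
            _ < ε := by linarith
end

section
/- Let c ∈ ℝ with c ≥ 0. Then {(y₁,y₂) ∈ ℝ² : −sin⁴θ·y₁ + cos⁴θ·y₂ ≤ c for all θ ∈ [0,π/2]} = {(y₁,y₂) ∈ ℝ² : y₁ ≥ −c and y₂ ≤ c}. -/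
open Real Set

/- At θ = π/2 and θ = 0 the constraints read -y₁ ≤ c and y₂ ≤ c. Conversely, these two bounds
give -sin⁴θ·y₁ + cos⁴θ·y₂ ≤ (sin⁴θ + cos⁴θ)·c ≤ c, since sin⁴θ + cos⁴θ ≤ (sin²θ + cos²θ)² = 1
and c ≥ 0. -/

theorem Real.sin_pow_four_add_cos_pow_four_le_one (θ : ℝ) : sin θ ^ 4 + cos θ ^ 4 ≤ 1 := by
  nlinarith [sin_sq_add_cos_sq θ, sq_nonneg (sin θ * cos θ)]

theorem neg_mul_add_mul_le_of_add_le_one {a b c y₁ y₂ : ℝ} (ha : 0 ≤ a) (hb : 0 ≤ b)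
    (hab : a + b ≤ 1) (hc : 0 ≤ c) (h₁ : -c ≤ y₁) (h₂ : y₂ ≤ c) : -a * y₁ + b * y₂ ≤ c :=
  calc -a * y₁ + b * y₂ = a * -y₁ + b * y₂ := by ring
    _ ≤ a * c + b * c :=
      add_le_add (mul_le_mul_of_nonneg_left (neg_le.mpr h₁) ha) (mul_le_mul_of_nonneg_left h₂ hb)
    _ = (a + b) * c := by ring
    _ ≤ c := mul_le_of_le_one_left hc hab

theorem stmt_8 (c : ℝ) (hc : 0 ≤ c) :
    {y : ℝ × ℝ | ∀ θ ∈ Set.Icc (0 : ℝ) (π / 2),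
        -(Real.sin θ ^ 4) * y.1 + Real.cos θ ^ 4 * y.2 ≤ c} =
      {y : ℝ × ℝ | -c ≤ y.1 ∧ y.2 ≤ c} := by
  ext y
  constructor
  · intro h
    have h₁ := h (π / 2) ⟨by positivity, le_rfl⟩
    have h₂ := h 0 ⟨le_rfl, by positivity⟩
    simp only [sin_pi_div_two, cos_pi_div_two, sin_zero, cos_zero] at h₁ h₂
    constructor <;> linarith
  · rintro ⟨h₁, h₂⟩ θ -
    exact neg_mul_add_mul_le_of_add_le_one (by positivity) (by positivity)
      (sin_pow_four_add_cos_pow_four_le_one θ) hc h₁ h₂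
end

section
/- Let M > 0 be a real number. Then {(y₁,y₂) ∈ ℝ² : (1−a)²·y₁ + a²·y₂ ≥ M for all a ∈ [0,1]} = {(y₁,y₂) ∈ ℝ² : y₁ > M and y₂ ≥ M + M²/(y₁ − M)}. Equivalently, the set {(y₁,y₂) ∈ ℝ² : −cos⁴θ·y₁ − sin⁴θ·y₂ ≤ −M for all θ ∈ [0,π/2]} equals the same set. -/
/-! Substituting `y₁ = M + u`, `y₂ = M + v`, the constraint at `a` reads
`2a(1-a)M ≤ (1-a)²u + a²v`, a nonnegativity condition for a binary quadratic form on the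
quadrant; it holds iff `u > 0` and `uv ≥ M²`. The necessity of `uv ≥ M²` comes from evaluating
at the minimiser `a = y₁ / (y₁ + y₂)`. The trigonometric version is the substitution
`a = sin² θ`, which maps `[0, π/2]` onto `[0, 1]`. -/

open Real Set

theorem forall_mem_Icc_le_sq_combination_iff {M : ℝ} (hM : 0 < M) (y₁ y₂ : ℝ) :
    (∀ a ∈ Icc (0 : ℝ) 1, M ≤ (1 - a) ^ 2 * y₁ + a ^ 2 * y₂) ↔
      M < y₁ ∧ M ^ 2 ≤ (y₁ - M) * (y₂ - M) := by
  constructor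
  · intro h
    have hy₁ : M ≤ y₁ := by simpa using h 0 ⟨le_rfl, zero_le_one⟩
    have hy₂ : M ≤ y₂ := by simpa using h 1 ⟨zero_le_one, le_rfl⟩
    have hs : 0 < y₁ + y₂ := by linarith
    have hmin : M ≤ y₁ * y₂ / (y₁ + y₂) := by
      have ha : y₁ / (y₁ + y₂) ∈ Icc (0 : ℝ) 1 :=
        ⟨div_nonneg (by linarith) hs.le, (div_le_one hs).2 (by linarith)⟩
      convert h _ ha using 1
      field_simp
      ring
    have hprod : M ^ 2 ≤ (y₁ - M) * (y₂ - M) := by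
      rw [le_div_iff₀ hs] at hmin
      linarith
    refine ⟨hy₁.lt_of_ne fun hEq => ?_, hprod⟩
    rw [← hEq, sub_self, zero_mul] at hprod
    exact (pow_pos hM 2).not_ge hprod
  · rintro ⟨hy₁, hprod⟩ a ⟨ha₀, ha₁⟩
    -- `(y₁ - M) * ((1-a)²y₁ + a²y₂ - M) = ((1-a)(y₁-M) - aM)² + a²((y₁-M)(y₂-M) - M²)`
    nlinarith [sq_nonneg ((1 - a) * (y₁ - M) - a * M), sq_nonneg a,
      mul_nonneg (mul_nonneg ha₀ (sub_nonneg.2 ha₁)) hM.le]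

theorem add_sq_div_sub_le_iff {M y₁ : ℝ} (hy₁ : M < y₁) (y₂ : ℝ) :
    M + M ^ 2 / (y₁ - M) ≤ y₂ ↔ M ^ 2 ≤ (y₁ - M) * (y₂ - M) := by
  rw [← le_sub_iff_add_le', div_le_iff₀ (sub_pos.2 hy₁), mul_comm]

theorem forall_mem_Icc_sin_sq_iff {P : ℝ → Prop} :
    (∀ θ ∈ Icc (0 : ℝ) (π / 2), P (sin θ ^ 2)) ↔ ∀ a ∈ Icc (0 : ℝ) 1, P a := by
  refine ⟨fun h a ha => ?_, fun h θ _ => h _ ⟨sq_nonneg _, sin_sq_le_one θ⟩⟩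
  have hsurj : Icc (sin 0 ^ 2) (sin (π / 2) ^ 2) ⊆ (fun θ => sin θ ^ 2) '' Icc 0 (π / 2) :=
    intermediate_value_Icc (by positivity)
      (by fun_prop : Continuous fun θ => sin θ ^ 2).continuousOn
  obtain ⟨θ, hθ, rfl⟩ := hsurj (by simpa using ha)
  exact h θ hθ

theorem stmt_10 (M : ℝ) (hM : 0 < M) :
    ({y : ℝ × ℝ | ∀ a ∈ Set.Icc (0 : ℝ) 1, M ≤ (1 - a) ^ 2 * y.1 + a ^ 2 * y.2} =
      {y : ℝ × ℝ | M < y.1 ∧ M + M ^ 2 / (y.1 - M) ≤ y.2}) ∧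
    ({y : ℝ × ℝ | ∀ θ ∈ Set.Icc (0 : ℝ) (π / 2),
        -(Real.cos θ ^ 4) * y.1 - Real.sin θ ^ 4 * y.2 ≤ -M} =
      {y : ℝ × ℝ | M < y.1 ∧ M + M ^ 2 / (y.1 - M) ≤ y.2}) := by
  have key (y : ℝ × ℝ) : (∀ a ∈ Icc (0 : ℝ) 1, M ≤ (1 - a) ^ 2 * y.1 + a ^ 2 * y.2) ↔
      M < y.1 ∧ M + M ^ 2 / (y.1 - M) ≤ y.2 :=
    (forall_mem_Icc_le_sq_combination_iff hM y.1 y.2).trans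
      (and_congr_right fun hy₁ => (add_sq_div_sub_le_iff hy₁ y.2).symm)
  refine ⟨ext key, ext fun y => ?_⟩
  rw [mem_ofPred_eq, mem_ofPred_eq, ← key, ← forall_mem_Icc_sin_sq_iff]
  refine forall₂_congr fun θ _ => ?_
  have hcos : cos θ ^ 4 = (1 - sin θ ^ 2) ^ 2 := by rw [← cos_sq', ← pow_mul]
  have hsin : (sin θ ^ 2) ^ 2 = sin θ ^ 4 := by rw [← pow_mul]
  rw [hcos, hsin]
  constructor <;> intro h <;> linarith
end

section
/- Let f = (f₁,f₂,f₃,f₄) ∈ C^∞(ℝ²,ℝ⁴). Suppose H₀(x) is nonempty for every x ∈ E with x ≠ (0,0), and suppose f₃(0,0) < 0. Set M = −f₃(0,0) > 0. Then H₁(0,0) equals the set of (y₁,y₂) ∈ ℝ² satisfying all of: y₁ ≥ −10⁻⁶·f₃(0,0); y₁ ≤ f₁(0,0) and y₂ ≤ f₁(0,0); y₁ ≤ f₂(0,0) and y₂ ≥ −f₂(0,0); y₁ > M and y₂ ≥ M + M²/(y₁ − M); y₁ ≥ −f₄(0,0) and y₂ ≤ f₄(0,0). -/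
set_option maxHeartbeats 1000000


open Real Set

lemma eight_le (a b : ℝ) (h : 1/2 ≤ a + b) : 1/8 ≤ a^2 + b^2 := by
  nlinarith [sq_nonneg (a-b)]

lemma curve_ge (α β z1 z2 M : ℝ) (hab : α + β = 1) (hM : 0 < M)
    (hz1 : M < z1) (hz2 : M < z2) (hprod : M * (z1 + z2) ≤ z1 * z2) :
    M ≤ α^2 * z1 + β^2 * z2 := by
  have key : (α^2*z1+β^2*z2)*(z1+z2) = (α*z1-β*z2)^2 + (α+β)^2*(z1*z2) := by ring
  rw [hab] at key
  nlinarith [sq_nonneg (α*z1 - β*z2)]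

lemma dir_limit (f1 f2 f3 f4 : ℝ × ℝ → ℝ)
    (hc1 : Continuous f1) (hc2 : Continuous f2) (hc3 : Continuous f3) (hc4 : Continuous f4)
    (z : ℝ × ℝ)
    (hz : ∀ ε > (0:ℝ), ∃ δ > (0:ℝ), ∀ y ∈ E, dist y ((0:ℝ),(0:ℝ)) < δ →
      ∃ z' ∈ H0 f1 f2 f3 f4 y, dist z z' < ε)
    (p q : ℝ) (hp : 0 ≤ p) (hq : 0 ≤ q) (hpq : 0 < p^2 + q^2) :
    (p^4/(p^2+q^2)^2) * z.1 + (q^4/(p^2+q^2)^2) * z.2 ≤ f1 (0,0) ∧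
    (q^4/(p^2+q^2)^2) * z.1 - (p^4/(p^2+q^2)^2) * z.2 ≤ f2 (0,0) ∧
    -((p^4/(p^2+q^2)^2) * z.1 + (q^4/(p^2+q^2)^2) * z.2) ≤ f3 (0,0) ∧
    -((q^4/(p^2+q^2)^2) * z.1 - (p^4/(p^2+q^2)^2) * z.2) ≤ f4 (0,0) := by
  set a : ℝ := p^4/(p^2+q^2)^2 with ha_def
  set b : ℝ := q^4/(p^2+q^2)^2 with hb_def
  have hS2 : (0:ℝ) < (p^2+q^2)^2 := by positivity
  have ha0 : 0 ≤ a := by positivity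
  have hb0 : 0 ≤ b := by positivity
  have ha1 : a ≤ 1 := by
    rw [ha_def, div_le_one hS2]; nlinarith [sq_nonneg p, sq_nonneg q, sq_nonneg (p*q)]
  have hb1 : b ≤ 1 := by
    rw [hb_def, div_le_one hS2]; nlinarith [sq_nonneg p, sq_nonneg q, sq_nonneg (p*q)]
  have key : ∀ ε > (0:ℝ),
      a * z.1 + b * z.2 ≤ f1 (0,0) + ε ∧
      b * z.1 - a * z.2 ≤ f2 (0,0) + ε ∧
      -(a * z.1 + b * z.2) ≤ f3 (0,0) + ε ∧
      -(b * z.1 - a * z.2) ≤ f4 (0,0) + ε := by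
    intro ε hε
    obtain ⟨δ, hδ, hglaeser⟩ := hz (ε/5) (by linarith)
    have hcont : ∀ g : ℝ × ℝ → ℝ, Continuous g → ∃ δ' > (0:ℝ),
        ∀ y : ℝ × ℝ, dist y ((0:ℝ),(0:ℝ)) < δ' → |g y - g (0,0)| < ε/2 := by
      intro g hg
      obtain ⟨δ', hδ', hg'⟩ := Metric.continuousAt_iff.mp hg.continuousAt (ε/2) (by linarith)
      exact ⟨δ', hδ', fun y hy => by rw [← Real.dist_eq]; exact hg' hy⟩
    obtain ⟨δ1, hδ1, hg1⟩ := hcont f1 hc1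
    obtain ⟨δ2, hδ2, hg2⟩ := hcont f2 hc2
    obtain ⟨δ3, hδ3, hg3⟩ := hcont f3 hc3
    obtain ⟨δ4, hδ4, hg4⟩ := hcont f4 hc4
    set δ' : ℝ := min (min δ δ1) (min (min δ2 δ3) (min δ4 1)) with hδ'_def
    have hδ'0 : 0 < δ' := by positivity
    set t : ℝ := δ' / (2 * (p + q + 1)) with ht_def
    have ht0 : 0 < t := by positivity
    set y : ℝ × ℝ := (t * p, t * q) with hy_def
    have htp : t * p < δ' := by
      rw [ht_def, div_mul_eq_mul_div, div_lt_iff₀ (by positivity)]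
      nlinarith
    have htq : t * q < δ' := by
      rw [ht_def, div_mul_eq_mul_div, div_lt_iff₀ (by positivity)]
      nlinarith
    have hdisty : dist y ((0:ℝ),(0:ℝ)) < δ' := by
      rw [Prod.dist_eq]
      simp only [Real.dist_eq, sub_zero]
      rw [abs_of_nonneg (by positivity), abs_of_nonneg (by positivity)]
      exact max_lt htp htq
    have hyE : y ∈ E := by
      constructor
      · exact Set.mem_Icc.mpr ⟨by positivity, le_trans htp.le (by rw [hδ'_def]; simp)⟩
      · exact Set.mem_Icc.mpr ⟨by positivity, le_trans htq.le (by rw [hδ'_def]; simp)⟩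
    have hyne : y ≠ ((0:ℝ),(0:ℝ)) := by
      intro hcon
      rw [hy_def, Prod.mk.injEq] at hcon
      have hp0 : p = 0 := by
        rcases mul_eq_zero.mp hcon.1 with h | h
        · exact absurd h (ne_of_gt ht0)
        · exact h
      have hq0 : q = 0 := by
        rcases mul_eq_zero.mp hcon.2 with h | h
        · exact absurd h (ne_of_gt ht0)
        · exact h
      rw [hp0, hq0] at hpq; norm_num at hpq
    obtain ⟨z', hz'mem, hz'dist⟩ := hglaeser y hyE
      (lt_of_lt_of_le hdisty (le_trans (min_le_left _ _) (min_le_left _ _)))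
    rw [H0, if_neg hyne] at hz'mem
    have hy1 : y.1 = t * p := rfl
    have hy2 : y.2 = t * q := rfl
    have hca : y.1 ^ 4 / (y.1 ^ 2 + y.2 ^ 2) ^ 2 = a := by
      rw [hy1, hy2, ha_def]
      rw [show ((t*p)^2+(t*q)^2)^2 = t^4 * (p^2+q^2)^2 by ring,
          show (t*p)^4 = t^4 * p^4 by ring,
          mul_div_mul_left _ _ (by positivity : (t:ℝ)^4 ≠ 0)]
    have hcb : y.2 ^ 4 / (y.1 ^ 2 + y.2 ^ 2) ^ 2 = b := by
      rw [hy1, hy2, hb_def]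
      rw [show ((t*p)^2+(t*q)^2)^2 = t^4 * (p^2+q^2)^2 by ring,
          show (t*q)^4 = t^4 * q^4 by ring,
          mul_div_mul_left _ _ (by positivity : (t:ℝ)^4 ≠ 0)]
    rw [hca, hcb] at hz'mem
    obtain ⟨m1, m2, m3, m4⟩ := hz'mem
    have hd1 : |z.1 - z'.1| < ε/5 := by
      rw [← Real.dist_eq]
      exact lt_of_le_of_lt (le_trans (le_max_left _ _) (le_of_eq (Prod.dist_eq).symm)) hz'dist
    have hd2 : |z.2 - z'.2| < ε/5 := by
      rw [← Real.dist_eq]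
      exact lt_of_le_of_lt (le_trans (le_max_right _ _) (le_of_eq (Prod.dist_eq).symm)) hz'dist
    have hd1' := abs_lt.mp hd1
    have hd2' := abs_lt.mp hd2
    have hbound : ∀ c u u' : ℝ, 0 ≤ c → c ≤ 1 → |u - u'| < ε/5 → c * u ≤ c * u' + ε/5 := by
      intro c u u' hc0 hc1 hd
      have := abs_lt.mp hd
      nlinarith
    have hf1y : f1 y < f1 (0,0) + ε/2 := by
      have := abs_lt.mp (hg1 y (lt_of_lt_of_le hdisty (le_trans (min_le_left _ _) (min_le_right _ _))))
      linarith
    have hf2y : f2 y < f2 (0,0) + ε/2 := by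
      have := abs_lt.mp (hg2 y (lt_of_lt_of_le hdisty
        (le_trans (min_le_right _ _) (le_trans (min_le_left _ _) (min_le_left _ _)))))
      linarith
    have hf3y : f3 y < f3 (0,0) + ε/2 := by
      have := abs_lt.mp (hg3 y (lt_of_lt_of_le hdisty
        (le_trans (min_le_right _ _) (le_trans (min_le_left _ _) (min_le_right _ _)))))
      linarith
    have hf4y : f4 y < f4 (0,0) + ε/2 := by
      have := abs_lt.mp (hg4 y (lt_of_lt_of_le hdisty
        (le_trans (min_le_right _ _) (le_trans (min_le_right _ _) (min_le_left _ _)))))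
      linarith
    have t1 := hbound a z.1 z'.1 ha0 ha1 hd1
    have t2 := hbound b z.2 z'.2 hb0 hb1 hd2
    have t3 := hbound a z'.1 z.1 ha0 ha1 (by rwa [abs_sub_comm])
    have t4 := hbound b z'.2 z.2 hb0 hb1 (by rwa [abs_sub_comm])
    have t5 := hbound b z.1 z'.1 hb0 hb1 hd1
    have t6 := hbound a z.2 z'.2 ha0 ha1 hd2
    have t7 := hbound b z'.1 z.1 hb0 hb1 (by rwa [abs_sub_comm])
    have t8 := hbound a z'.2 z.2 ha0 ha1 (by rwa [abs_sub_comm])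
    refine ⟨by linarith, by linarith, by linarith, by linarith⟩
  refine ⟨?_, ?_, ?_, ?_⟩ <;>
    { apply le_of_forall_pos_le_add
      intro ε hε
      have := key ε hε
      tauto }

theorem stmt_11 (f1 f2 f3 f4 : ℝ × ℝ → ℝ)
    (hf1 : ContDiff ℝ (⊤ : ℕ∞) f1) (hf2 : ContDiff ℝ (⊤ : ℕ∞) f2)
    (hf3 : ContDiff ℝ (⊤ : ℕ∞) f3) (hf4 : ContDiff ℝ (⊤ : ℕ∞) f4)
    (h : ∀ x ∈ E, x ≠ ((0 : ℝ), (0 : ℝ)) → (H f1 f2 f3 f4 0 x).Nonempty)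
    (h3 : f3 (0, 0) < 0) (M : ℝ) (hM : M = -f3 (0, 0)) :
    H f1 f2 f3 f4 1 (0, 0) =
      {y : ℝ × ℝ |
        -(((10 : ℝ) ^ 6)⁻¹ * f3 (0, 0)) ≤ y.1 ∧
        (y.1 ≤ f1 (0, 0) ∧ y.2 ≤ f1 (0, 0)) ∧
        (y.1 ≤ f2 (0, 0) ∧ -f2 (0, 0) ≤ y.2) ∧
        (M < y.1 ∧ M + M ^ 2 / (y.1 - M) ≤ y.2) ∧
        (-f4 (0, 0) ≤ y.1 ∧ y.2 ≤ f4 (0, 0))} := by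
  have hM0 : 0 < M := by rw [hM]; linarith
  ext z
  simp only [H, glaeserRefine, Set.mem_sep_iff, Set.mem_setOf_eq]
  constructor
  · rintro ⟨hz0, hzg⟩
    have hc1 := hf1.continuous
    have hc2 := hf2.continuous
    have hc3 := hf3.continuous
    have hc4 := hf4.continuous
    have L1 := dir_limit f1 f2 f3 f4 hc1 hc2 hc3 hc4 z hzg 1 0 zero_le_one le_rfl (by norm_num)
    have L2 := dir_limit f1 f2 f3 f4 hc1 hc2 hc3 hc4 z hzg 0 1 le_rfl zero_le_one (by norm_num)
    norm_num at L1 L2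
    obtain ⟨l11, l12, l13, l14⟩ := L1
    obtain ⟨l21, l22, l23, l24⟩ := L2
    rw [H0, if_pos rfl] at hz0
    obtain ⟨hp1, hp2, hp4, hp3⟩ := hz0
    simp only [Prod.mk_zero_zero] at hM h3 hp3 l11 l12 l13 l14 l21 l22 l23 l24 hp1 hp2 hp4 ⊢
    have hz1M : M ≤ z.1 := by linarith
    have hz2M : M ≤ z.2 := by linarith
    have hz1nn : 0 ≤ z.1 := by linarith
    have hz2nn : 0 ≤ z.2 := by linarith
    have L3 := dir_limit f1 f2 f3 f4 hc1 hc2 hc3 hc4 z hzg (Real.sqrt z.2) (Real.sqrt z.1)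
      (Real.sqrt_nonneg _) (Real.sqrt_nonneg _)
      (by rw [Real.sq_sqrt hz2nn, Real.sq_sqrt hz1nn]; linarith)
    have e2 : Real.sqrt z.2 ^ 2 = z.2 := Real.sq_sqrt hz2nn
    have e1 : Real.sqrt z.1 ^ 2 = z.1 := Real.sq_sqrt hz1nn
    have e4 : Real.sqrt z.2 ^ 4 = z.2^2 := by rw [show (4:ℕ) = 2*2 from rfl, pow_mul, e2]
    have e3 : Real.sqrt z.1 ^ 4 = z.1^2 := by rw [show (4:ℕ) = 2*2 from rfl, pow_mul, e1]
    have key := L3.2.2.1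
    rw [e1, e2, e3, e4] at key
    simp only [Prod.mk_zero_zero] at key
    have hsum : 0 < z.1 + z.2 := by linarith
    have hsum2 : 0 < (z.2 + z.1)^2 := pow_pos (by linarith) 2
    have key2 : M * (z.2+z.1)^2 ≤ z.2^2 * z.1 + z.1^2 * z.2 := by
      have hk : M ≤ z.2^2/(z.2+z.1)^2 * z.1 + z.1^2/(z.2+z.1)^2 * z.2 := by rw [hM]; linarith
      calc M * (z.2+z.1)^2 ≤ (z.2^2/(z.2+z.1)^2 * z.1 + z.1^2/(z.2+z.1)^2 * z.2) * (z.2+z.1)^2 :=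
            mul_le_mul_of_nonneg_right hk hsum2.le
        _ = z.2^2 * z.1 + z.1^2 * z.2 := by field_simp
    have hprod : M * (z.1+z.2) ≤ z.1*z.2 := by nlinarith [key2, hsum]
    have hz1Ms : M < z.1 := by nlinarith [hprod, hz2M, hz1M, hM0]
    have hdiv : M + M^2/(z.1-M) ≤ z.2 := by
      have h1 : 0 < z.1 - M := by linarith
      have h2 : M^2/(z.1-M) ≤ z.2 - M := by rw [div_le_iff₀ h1]; nlinarith [hprod]
      linarith
    refine ⟨?_, ⟨l11, l21⟩, ⟨l22, by linarith⟩, ⟨hz1Ms, hdiv⟩, ⟨by linarith, l14⟩⟩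
    norm_num at hp3 ⊢
    linarith
  · rintro ⟨hA, ⟨hB1, hB2⟩, ⟨hC1, hC2⟩, ⟨hD1, hD2⟩, ⟨hE1, hE2⟩⟩
    have hc1 := hf1.continuous
    have hc2 := hf2.continuous
    have hc3 := hf3.continuous
    have hc4 := hf4.continuous
    have hz1M : M < z.1 := hD1
    have hMdiv : 0 < M^2/(z.1-M) := div_pos (by positivity) (by linarith)
    have hz2M : M < z.2 := by linarith
    have hprod : M*(z.1+z.2) ≤ z.1*z.2 := by
      have h1 : 0 < z.1 - M := by linarith
      have h2 := (div_le_iff₀ h1).mp (by linarith : M^2/(z.1-M) ≤ z.2 - M)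
      nlinarith [h2]
    have hf1p : 0 < f1 (0,0) := by linarith
    have hf2p : 0 < f2 (0,0) := by linarith
    have hf4p : 0 < f4 (0,0) := by linarith
    have hzH0 : z ∈ H0 f1 f2 f3 f4 ((0:ℝ),(0:ℝ)) := by
      rw [H0, if_pos rfl]
      refine ⟨hf1p.le, hf2p.le, hf4p.le, ?_⟩
      norm_num at hA ⊢
      linarith
    refine ⟨hzH0, ?_⟩
    intro ε hε
    have hcont : ∀ g : ℝ × ℝ → ℝ, Continuous g → ∃ δ' > (0:ℝ),
        ∀ y : ℝ × ℝ, dist y ((0:ℝ),(0:ℝ)) < δ' → |g y - g (0,0)| < ε/9 := by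
      intro g hg
      obtain ⟨δ', hδ', hg'⟩ := Metric.continuousAt_iff.mp hg.continuousAt (ε/9) (by linarith)
      exact ⟨δ', hδ', fun y hy => by rw [← Real.dist_eq]; exact hg' hy⟩
    obtain ⟨δ1, hδ1, hg1⟩ := hcont f1 hc1
    obtain ⟨δ2, hδ2, hg2⟩ := hcont f2 hc2
    obtain ⟨δ3, hδ3, hg3⟩ := hcont f3 hc3
    obtain ⟨δ4, hδ4, hg4⟩ := hcont f4 hc4
    refine ⟨min (min δ1 δ2) (min δ3 δ4), by positivity, ?_⟩
    intro y hyE hydist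
    by_cases hy0 : y = ((0:ℝ),(0:ℝ))
    · exact ⟨z, by rw [hy0]; exact hzH0, by simp [hε]⟩
    have hf1c : |f1 y - f1 (0,0)| < ε/9 :=
      hg1 y (lt_of_lt_of_le hydist (le_trans (min_le_left _ _) (min_le_left _ _)))
    have hf2c : |f2 y - f2 (0,0)| < ε/9 :=
      hg2 y (lt_of_lt_of_le hydist (le_trans (min_le_left _ _) (min_le_right _ _)))
    have hf3c : |f3 y - f3 (0,0)| < ε/9 :=
      hg3 y (lt_of_lt_of_le hydist (le_trans (min_le_right _ _) (min_le_left _ _)))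
    have hf4c : |f4 y - f4 (0,0)| < ε/9 :=
      hg4 y (lt_of_lt_of_le hydist (le_trans (min_le_right _ _) (min_le_right _ _)))
    have hS : 0 < y.1^2 + y.2^2 := by
      have hne : y.1 ≠ 0 ∨ y.2 ≠ 0 := by
        by_contra hcon
        push_neg at hcon
        exact hy0 (Prod.ext hcon.1 hcon.2)
      rcases hne with hne | hne
      · positivity
      · positivity
    have hS2 : 0 < (y.1^2+y.2^2)^2 := by positivity
    obtain ⟨a, ha_def⟩ : ∃ x : ℝ, x = y.1^4/(y.1^2+y.2^2)^2 := ⟨_, rfl⟩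
    obtain ⟨b, hb_def⟩ : ∃ x : ℝ, x = y.2^4/(y.1^2+y.2^2)^2 := ⟨_, rfl⟩
    have ha0 : 0 ≤ a := by rw [ha_def]; positivity
    have hb0 : 0 ≤ b := by rw [hb_def]; positivity
    have hab1 : a + b ≤ 1 := by
      rw [ha_def, hb_def, ← add_div, div_le_one hS2]
      nlinarith [sq_nonneg (y.1*y.2)]
    have habl : 1/2 ≤ a + b := by
      rw [ha_def, hb_def, ← add_div, le_div_iff₀ hS2]
      nlinarith [sq_nonneg (y.1^2-y.2^2)]
    have hr2 : 0 < a^2 + b^2 := by nlinarith [sq_nonneg (a-b), sq_nonneg (a+b)]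
    obtain ⟨u, hu_def⟩ : ∃ x : ℝ, x = a*z.1 + b*z.2 := ⟨_, rfl⟩
    obtain ⟨v, hv_def⟩ : ∃ x : ℝ, x = b*z.1 - a*z.2 := ⟨_, rfl⟩
    have hu1 : u ≤ f1 (0,0) := by
      have k1 : a*z.1 ≤ a*f1 (0,0) := mul_le_mul_of_nonneg_left hB1 ha0
      have k2 : b*z.2 ≤ b*f1 (0,0) := mul_le_mul_of_nonneg_left hB2 hb0
      have k3 : 0 ≤ (1-(a+b))*f1 (0,0) := mul_nonneg (by linarith) hf1p.le
      rw [hu_def]; linarith [k1, k2, k3]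
    have huM : M ≤ u := by
      have hα : (y.1^2/(y.1^2+y.2^2)) + (y.2^2/(y.1^2+y.2^2)) = 1 := by field_simp
      have hcg := curve_ge (y.1^2/(y.1^2+y.2^2)) (y.2^2/(y.1^2+y.2^2)) z.1 z.2 M hα hM0 hz1M hz2M hprod
      have ea : (y.1^2/(y.1^2+y.2^2))^2 = a := by rw [ha_def, div_pow]; ring_nf
      have eb : (y.2^2/(y.1^2+y.2^2))^2 = b := by rw [hb_def, div_pow]; ring_nf
      rw [ea, eb] at hcg
      rw [hu_def]; exact hcg
    have hv2 : v ≤ f2 (0,0) := by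
      have k1 : b*z.1 ≤ b*f2 (0,0) := mul_le_mul_of_nonneg_left hC1 hb0
      have k2 : a*(-f2 (0,0)) ≤ a*z.2 := mul_le_mul_of_nonneg_left hC2 ha0
      have k3 : 0 ≤ (1-(a+b))*f2 (0,0) := mul_nonneg (by linarith) hf2p.le
      rw [hv_def]; linarith [k1, k2, k3]
    have hv4 : -f4 (0,0) ≤ v := by
      have k1 : a*z.2 ≤ a*f4 (0,0) := mul_le_mul_of_nonneg_left hE2 ha0
      have k2 : b*(-f4 (0,0)) ≤ b*z.1 := mul_le_mul_of_nonneg_left hE1 hb0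
      have k3 : 0 ≤ (1-(a+b))*f4 (0,0) := mul_nonneg (by linarith) hf4p.le
      rw [hv_def]; linarith [k1, k2, k3]
    obtain ⟨w, hw⟩ := h y hyE hy0
    rw [show H f1 f2 f3 f4 0 = H0 f1 f2 f3 f4 from rfl, H0, if_neg hy0] at hw
    obtain ⟨w1, w2, w3, w4⟩ := hw
    rw [← ha_def, ← hb_def] at w1 w2 w3 w4
    have box13 : -f3 y ≤ f1 y := by linarith
    have box24 : -f4 y ≤ f2 y := by linarith
    obtain ⟨u', hu'_def⟩ : ∃ x : ℝ, x = max (-f3 y) (min u (f1 y)) := ⟨_, rfl⟩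
    obtain ⟨v', hv'_def⟩ : ∃ x : ℝ, x = max (-f4 y) (min v (f2 y)) := ⟨_, rfl⟩
    have hu'le : u' ≤ f1 y := by rw [hu'_def]; exact max_le box13 (min_le_right _ _)
    have hu'ge : -f3 y ≤ u' := by rw [hu'_def]; exact le_max_left _ _
    have hv'le : v' ≤ f2 y := by rw [hv'_def]; exact max_le box24 (min_le_right _ _)
    have hv'ge : -f4 y ≤ v' := by rw [hv'_def]; exact le_max_left _ _
    have huu' : |u - u'| < ε/9 := by
      have hab1' := abs_lt.mp hf1c
      have hab3' := abs_lt.mp hf3c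
      rw [abs_lt]
      constructor
      · rcases le_total (-f3 y) u with hh | hh
        · have h1 : u' ≤ u := by rw [hu'_def]; exact max_le hh (min_le_left _ _)
          linarith
        · have h1 : u' ≤ -f3 y := by
            rw [hu'_def]; exact max_le le_rfl (le_trans (min_le_left _ _) hh)
          linarith [huM]
      · rcases le_total u (f1 y) with hh | hh
        · have h1 : u ≤ u' := by rw [hu'_def]; exact le_trans (le_min le_rfl hh) (le_max_right _ _)
          linarith
        · have h1 : f1 y ≤ u' := by rw [hu'_def]; exact le_trans (le_of_eq (min_eq_right hh).symm) (le_max_right _ _)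
          linarith [hu1]
    have hvv' : |v - v'| < ε/9 := by
      have hab2' := abs_lt.mp hf2c
      have hab4' := abs_lt.mp hf4c
      rw [abs_lt]
      constructor
      · rcases le_total (-f4 y) v with hh | hh
        · have h1 : v' ≤ v := by rw [hv'_def]; exact max_le hh (min_le_left _ _)
          linarith
        · have h1 : v' ≤ -f4 y := by
            rw [hv'_def]; exact max_le le_rfl (le_trans (min_le_left _ _) hh)
          linarith [hv4]
      · rcases le_total v (f2 y) with hh | hh
        · have h1 : v ≤ v' := by rw [hv'_def]; exact le_trans (le_min le_rfl hh) (le_max_right _ _)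
          linarith
        · have h1 : f2 y ≤ v' := by rw [hv'_def]; exact le_trans (le_of_eq (min_eq_right hh).symm) (le_max_right _ _)
          linarith [hv2]
    have h2 : (1:ℝ)/8 ≤ a^2+b^2 := eight_le a b habl
    have k1 : ε*(1/8) ≤ ε*(a^2+b^2) := mul_le_mul_of_nonneg_left h2 hε.le
    have k2 : ε*(a+b) ≤ ε*1 := mul_le_mul_of_nonneg_left hab1 hε.le
    have k3 : a*|u-u'| ≤ a*(ε/9) := mul_le_mul_of_nonneg_left huu'.le ha0
    have k4 : b*|v-v'| ≤ b*(ε/9) := mul_le_mul_of_nonneg_left hvv'.le hb0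
    have k5 : b*|u-u'| ≤ b*(ε/9) := mul_le_mul_of_nonneg_left huu'.le hb0
    have k6 : a*|v-v'| ≤ a*(ε/9) := mul_le_mul_of_nonneg_left hvv'.le ha0
    have e1 : z.1 - (a*u' + b*v')/(a^2+b^2) = (a*(u-u') + b*(v-v'))/(a^2+b^2) := by
      rw [hu_def, hv_def]
      field_simp
      ring
    have e2 : z.2 - (b*u' - a*v')/(a^2+b^2) = (b*(u-u') - a*(v-v'))/(a^2+b^2) := by
      rw [hu_def, hv_def]
      field_simp
      ring
    have final1 : |(a*(u-u') + b*(v-v'))/(a^2+b^2)| < ε := by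
      rw [abs_div, abs_of_pos hr2, div_lt_iff₀ hr2]
      have hbnd : |a*(u-u') + b*(v-v')| ≤ a*|u-u'| + b*|v-v'| := by
        calc |a*(u-u') + b*(v-v')| ≤ |a*(u-u')| + |b*(v-v')| := abs_add_le _ _
          _ = a*|u-u'| + b*|v-v'| := by
              rw [abs_mul, abs_mul, abs_of_nonneg ha0, abs_of_nonneg hb0]
      linarith
    have final2 : |(b*(u-u') - a*(v-v'))/(a^2+b^2)| < ε := by
      rw [abs_div, abs_of_pos hr2, div_lt_iff₀ hr2]
      have hbnd : |b*(u-u') - a*(v-v')| ≤ b*|u-u'| + a*|v-v'| := by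
        calc |b*(u-u') - a*(v-v')| ≤ |b*(u-u')| + |a*(v-v')| := abs_sub _ _
          _ = b*|u-u'| + a*|v-v'| := by
              rw [abs_mul, abs_mul, abs_of_nonneg ha0, abs_of_nonneg hb0]
      linarith
    have hdist_eq : dist z (((a*u' + b*v')/(a^2+b^2), (b*u' - a*v')/(a^2+b^2)) : ℝ × ℝ)
        = max |z.1 - (a*u' + b*v')/(a^2+b^2)| |z.2 - (b*u' - a*v')/(a^2+b^2)| := by
      rw [Prod.dist_eq, Real.dist_eq, Real.dist_eq]
    refine ⟨((a*u' + b*v')/(a^2+b^2), (b*u' - a*v')/(a^2+b^2)), ?_, ?_⟩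
    · rw [H0, if_neg hy0]
      rw [Set.mem_setOf_eq,
          show (((a*u' + b*v')/(a^2+b^2), (b*u' - a*v')/(a^2+b^2)) : ℝ × ℝ).1
            = (a*u' + b*v')/(a^2+b^2) from rfl,
          show (((a*u' + b*v')/(a^2+b^2), (b*u' - a*v')/(a^2+b^2)) : ℝ × ℝ).2
            = (b*u' - a*v')/(a^2+b^2) from rfl, ← ha_def, ← hb_def]
      have inv1 : a * ((a*u'+b*v')/(a^2+b^2)) + b * ((b*u'-a*v')/(a^2+b^2)) = u' := by
        field_simp [hr2.ne']
        ring
      have inv2 : b * ((a*u'+b*v')/(a^2+b^2)) - a * ((b*u'-a*v')/(a^2+b^2)) = v' := by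
        field_simp [hr2.ne']
        ring
      refine ⟨by rw [inv1]; exact hu'le, by rw [inv2]; exact hv'le, ?_, ?_⟩
      · rw [show -a * ((a*u'+b*v')/(a^2+b^2)) - b * ((b*u'-a*v')/(a^2+b^2))
            = -(a * ((a*u'+b*v')/(a^2+b^2)) + b * ((b*u'-a*v')/(a^2+b^2))) from by ring, inv1]
        linarith [hu'ge]
      · rw [show -b * ((a*u'+b*v')/(a^2+b^2)) + a * ((b*u'-a*v')/(a^2+b^2))
            = -(b * ((a*u'+b*v')/(a^2+b^2)) - a * ((b*u'-a*v')/(a^2+b^2))) from by ring, inv2]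
        linarith [hv'ge]
    · rw [hdist_eq, e1, e2]
      exact max_lt final1 final2
end
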